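/- Let L ≥ 2, d_0 ≥ 1, d_L ≥ 1, and 1 ≤ r ≤ min{d_0, d_L}. Let U₁ ∈ ℝ^{d_L×r} and V₁ ∈ ℝ^{d_0×r} have orthonormal columns, let λ₁, …, λ_r > 0, and define G as in the general Gram-matrix construction. Suppose λ_i ∈ [m − δ, m + δ] for all i = 1, …, r, where 0 < δ < m, and suppose (m + δ)/(m − δ) < L^{1/(2(L−1))}. Then: (i) the r² eigenvalues ν_{i,j} = Σ_{l=1}^{L} λ_i^{2(L−l)} λ_j^{2(l−1)} (1 ≤ i,j ≤ r) all lie in [L(m − δ)^{2(L−1)}, L(m + δ)^{2(L−1)}]; (ii) the (d_0 + d_L − 2r)r remaining nonzero eigenvalues all lie in [(m − δ)^{2(L−1)}, (m + δ)^{2(L−1)}]; (iii) every eigenvalue in the first cluster is strictly larger than every eigenvalue in the second cluster; (iv) the ratio of any eigenvalue ν_dom of the first cluster to any eigenvalue ν_bulk of the second cluster satisfies L((m−δ)/(m+δ))^{2(L−1)} ≤ ν_dom/ν_bulk ≤ L((m+δ)/(m−δ))^{2(L−1)}. -/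

import Mathlib

open Matrix
open scoped Kronecker

/-!
Complete `U₁` and `V₁` to orthogonal matrices `U = [U₁ U₂]` and `V = [V₁ V₂]`. Then
`U₁ diag(f) U₁ᵀ = U diag(f, 0) Uᵀ` and `1 = U Uᵀ`, so every Kronecker summand of `G` is the
conjugate by `U ⊗ V` of a diagonal matrix. Hence `G` is orthogonally similar to a diagonal matrix,
whose entries are read off blockwise: `ν_{ij}` on the `r × r` block, `λ^{2(L-1)}` on the two
mixed blocks and `0` on the remaining one.

The cluster bounds are termwise: each of the `L` summands of `ν_{ij}` is a product of powers of
total degree `2(L-1)` of numbers in `[m - δ, m + δ]`, and the gap hypothesis says precisely that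
`(m + δ)^{2(L-1)} < L (m - δ)^{2(L-1)}`.
-/

section Bounds

variable {R : Type*} [Semiring R] [LinearOrder R] [IsStrictOrderedRing R]

theorem pow_mul_pow_mem_Icc {lo hi a b : R} (hlo : 0 ≤ lo) (ha : a ∈ Set.Icc lo hi)
    (hb : b ∈ Set.Icc lo hi) (p q : ℕ) :
    a ^ p * b ^ q ∈ Set.Icc (lo ^ (p + q)) (hi ^ (p + q)) := by
  have ha₀ : 0 ≤ a := hlo.trans ha.1
  have hhi : 0 ≤ hi := ha₀.trans ha.2
  rw [pow_add, pow_add]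
  exact ⟨mul_le_mul (pow_le_pow_left₀ hlo ha.1 p) (pow_le_pow_left₀ hlo hb.1 q)
      (pow_nonneg hlo q) (pow_nonneg ha₀ p),
    mul_le_mul (pow_le_pow_left₀ ha₀ ha.2 p) (pow_le_pow_left₀ (hlo.trans hb.1) hb.2 q)
      (pow_nonneg (hlo.trans hb.1) q) (pow_nonneg hhi p)⟩

theorem sum_pow_mul_pow_mem_Icc (L k : ℕ) {lo hi a b : R} (hlo : 0 ≤ lo)
    (ha : a ∈ Set.Icc lo hi) (hb : b ∈ Set.Icc lo hi) :
    ∑ l ∈ Finset.Icc 1 L, a ^ (k * (L - l)) * b ^ (k * (l - 1)) ∈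
      Set.Icc (L * lo ^ (k * (L - 1))) (L * hi ^ (k * (L - 1))) := by
  have hterm : ∀ l ∈ Finset.Icc 1 L, a ^ (k * (L - l)) * b ^ (k * (l - 1)) ∈
      Set.Icc (lo ^ (k * (L - 1))) (hi ^ (k * (L - 1))) := by
    intro l hl
    have hdeg : k * (L - l) + k * (l - 1) = k * (L - 1) := by
      rw [Finset.mem_Icc] at hl
      rw [← mul_add]
      congr 1
      omega
    simpa only [hdeg] using pow_mul_pow_mem_Icc hlo ha hb (k * (L - l)) (k * (l - 1))
  constructor
  · simpa using Finset.card_nsmul_le_sum _ _ _ fun l hl => (hterm l hl).1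
  · simpa using Finset.sum_le_card_nsmul _ _ _ fun l hl => (hterm l hl).2

end Bounds

theorem div_mem_Icc_div {α : Type*} [Semifield α] [LinearOrder α] [IsStrictOrderedRing α]
    {x y A B a b : α} (hx : x ∈ Set.Icc A B) (hy : y ∈ Set.Icc a b) (hA : 0 ≤ A) (ha : 0 < a) :
    x / y ∈ Set.Icc (A / b) (B / a) :=
  ⟨div_le_div₀ (hA.trans hx.1) hx.1 (ha.trans_le hy.1) hy.2,
    div_le_div₀ (hA.trans (hx.1.trans hx.2)) hx.2 ha hy.1⟩

theorem pow_lt_mul_pow_of_div_lt_rpow_inv {x lo hi : ℝ} {n : ℕ} (hn : n ≠ 0) (hx : 0 ≤ x)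
    (hlo : 0 < lo) (hhi : 0 ≤ hi) (h : hi / lo < x ^ ((n : ℝ)⁻¹)) :
    hi ^ n < x * lo ^ n := by
  have h' := pow_lt_pow_left₀ h (by positivity) hn
  rwa [Real.rpow_inv_natCast_pow hx hn, div_pow, div_lt_iff₀ (by positivity)] at h'

theorem Finset.sum_Icc_one_eq_add_add_sum_Icc_two {M : Type*} [AddCommMonoid M] {L : ℕ}
    (hL : 2 ≤ L) (f : ℕ → M) :
    ∑ l ∈ Finset.Icc 1 L, f l = f 1 + f L + ∑ l ∈ Finset.Icc 2 (L - 1), f l := by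
  have h : Finset.Icc 1 L = insert 1 (insert L (Finset.Icc 2 (L - 1))) := by
    ext x
    simp only [Finset.mem_Icc, Finset.mem_insert]
    omega
  rw [h, Finset.sum_insert (by simp; omega), Finset.sum_insert (by simp; omega), add_assoc]

section Multiset

variable {α β γ δ M : Type*} [Fintype α] [Fintype β] [Fintype γ] [Fintype δ]

theorem Multiset.map_univ_sum (f : α ⊕ β → M) :
    Finset.univ.val.map f =
      Finset.univ.val.map (f ∘ Sum.inl) + Finset.univ.val.map (f ∘ Sum.inr) := by
  rw [← Finset.univ_disjSum_univ]
  simp [Finset.disjSum, Multiset.disjSum, Multiset.map_map]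

theorem Multiset.map_univ_sum_prod_sum (f : (α ⊕ β) × (γ ⊕ δ) → M) :
    Finset.univ.val.map f =
      (Finset.univ.val.map fun p : α × γ => f (Sum.inl p.1, Sum.inl p.2)) +
      (Finset.univ.val.map fun p : α × δ => f (Sum.inl p.1, Sum.inr p.2)) +
      (Finset.univ.val.map fun p : β × γ => f (Sum.inr p.1, Sum.inl p.2)) +
      (Finset.univ.val.map fun p : β × δ => f (Sum.inr p.1, Sum.inr p.2)) := by
  rw [← Multiset.map_univ_val_equiv ((Equiv.sumProdDistrib α β (γ ⊕ δ)).trans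
      (Equiv.sumCongr (Equiv.prodSumDistrib α γ δ) (Equiv.prodSumDistrib β γ δ))).symm,
    Multiset.map_map, map_univ_sum, map_univ_sum, map_univ_sum]
  simp [add_assoc, Function.comp_def]

theorem Multiset.map_univ_prod_fst (f : α → M) :
    (Finset.univ.val.map fun p : α × β => f p.1) =
      Finset.univ.val.bind fun a => Multiset.replicate (Fintype.card β) (f a) := by
  rw [← Finset.univ_product_univ, Finset.product_val]
  simp [SProd.sprod, Multiset.product, Multiset.map_bind, Multiset.map_const']

theorem Multiset.map_univ_prod_snd (f : β → M) :
    (Finset.univ.val.map fun p : α × β => f p.2) =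
      Finset.univ.val.bind fun b => Multiset.replicate (Fintype.card α) (f b) := by
  rw [← Multiset.map_univ_val_equiv (Equiv.prodComm β α), Multiset.map_map]
  exact map_univ_prod_fst f

end Multiset

namespace Matrix

theorem orthonormal_toLp_transpose_iff {m ι : Type*} [Fintype m] [DecidableEq ι]
    (M : Matrix m ι ℝ) : Orthonormal ℝ (fun i => WithLp.toLp 2 (Mᵀ i)) ↔ Mᵀ * M = 1 := by
  simp only [orthonormal_iff_ite, ← Matrix.ext_iff, mul_apply, one_apply, PiLp.inner_apply]
  simp [mul_comm]

theorem exists_orthogonal_fromCols {m ι κ : Type*} [Fintype m] [Fintype ι] [Fintype κ]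
    [DecidableEq m] [DecidableEq ι] [DecidableEq κ] (U₁ : Matrix m ι ℝ) (hU₁ : U₁ᵀ * U₁ = 1)
    (hcard : Fintype.card ι + Fintype.card κ = Fintype.card m) :
    ∃ U₂ : Matrix m κ ℝ, (fromCols U₁ U₂)ᵀ * fromCols U₁ U₂ = 1 ∧
      fromCols U₁ U₂ * (fromCols U₁ U₂)ᵀ = 1 := by
  set v : ι ⊕ κ → EuclideanSpace ℝ m := Sum.elim (fun i => WithLp.toLp 2 (U₁ᵀ i)) 0
  have hv : Orthonormal ℝ ((Set.range Sum.inl).domRestrict v) := by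
    convert ((orthonormal_toLp_transpose_iff U₁).2 hU₁).comp _
      (Equiv.ofInjective (Sum.inl : ι → ι ⊕ κ) Sum.inl_injective).symm.injective using 1
    ext ⟨_, i, rfl⟩ : 1
    simp [v]
  obtain ⟨b, hb⟩ := hv.exists_orthonormalBasis_extension_of_card_eq (by simp [hcard])
  refine ⟨of fun a j => b (Sum.inr j) a, ?_⟩
  have hU : fromCols U₁ (of fun a j => b (Sum.inr j) a) = of fun a x => b x a := by
    ext a (i | j)
    · simp [hb _ ⟨i, rfl⟩, v]
    · rfl
  have hUU : (of fun a x => b x a)ᵀ * of (fun a x => b x a) = 1 :=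
    (orthonormal_toLp_transpose_iff _).1 b.orthonormal
  rw [hU]
  exact ⟨hUU, (mul_eq_one_comm_of_card_eq _ _ _ (by simp [hcard])).1 hUU⟩

theorem fromCols_mul_diagonal_elim_zero_mul_transpose {m ι κ R : Type*} [Fintype ι]
    [Fintype κ] [DecidableEq ι] [DecidableEq κ] [CommSemiring R]
    (A₁ : Matrix m ι R) (A₂ : Matrix m κ R) (d : ι → R) :
    fromCols A₁ A₂ * diagonal (Sum.elim d (0 : κ → R)) * (fromCols A₁ A₂)ᵀ =
      A₁ * diagonal d * A₁ᵀ := by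
  rw [← fromBlocks_diagonal, transpose_fromCols, fromCols_mul_fromBlocks, fromCols_mul_fromRows]
  simp

theorem mul_mul_transpose_kronecker {m n p q R : Type*} [Fintype p] [Fintype q]
    [CommSemiring R] (A : Matrix m p R) (B : Matrix n q R) (D : Matrix p p R)
    (E : Matrix q q R) :
    (A * D * Aᵀ) ⊗ₖ (B * E * Bᵀ) = (A ⊗ₖ B) * (D ⊗ₖ E) * (A ⊗ₖ B)ᵀ := by
  rw [← kroneckerMap_transpose, mul_kronecker_mul, mul_kronecker_mul]

theorem charpoly_mul_mul_of_mul_eq_one {m n R : Type*} [Fintype m] [DecidableEq m]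
    [Fintype n] [DecidableEq n] [CommRing R] {A : Matrix m n R} {B : Matrix n m R}
    (hBA : B * A = 1) (hcard : Fintype.card m = Fintype.card n) (D : Matrix n n R) :
    (A * D * B).charpoly = D.charpoly := by
  have h := charpoly_mul_comm' (A * D) B
  rw [← Matrix.mul_assoc, hBA, Matrix.one_mul, hcard] at h
  exact (Polynomial.isRegular_X_pow _).left.eq_iff.mp h

theorem roots_charpoly_diagonal {n R : Type*} [Fintype n] [DecidableEq n] [CommRing R]
    [IsDomain R] (d : n → R) : (diagonal d).charpoly.roots = Finset.univ.val.map d := by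
  have h := Polynomial.roots_multiset_prod_X_sub_C (Finset.univ.val.map d)
  rw [Multiset.map_map] at h
  rwa [charpoly_diagonal, Finset.prod_eq_multiset_prod]

theorem IsHermitian.eigenvalues_map_eq_of_eq_mul_diagonal_mul_transpose {m n : Type*}
    [Fintype m] [DecidableEq m] [Fintype n] [DecidableEq n] {A : Matrix m m ℝ}
    (hA : A.IsHermitian) {W : Matrix m n ℝ} (hW : Wᵀ * W = 1)
    (hcard : Fintype.card m = Fintype.card n) {d : n → ℝ} (hAW : A = W * diagonal d * Wᵀ) :
    Finset.univ.val.map hA.eigenvalues = Finset.univ.val.map d := by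
  have h := hA.roots_charpoly_eq_eigenvalues
  rw [show A.charpoly = (diagonal d).charpoly by
      rw [hAW, charpoly_mul_mul_of_mul_eq_one hW hcard],
    roots_charpoly_diagonal] at h
  simpa using h.symm

end Matrix

section Gram

variable {m n ι κ κ' : Type*} [Fintype ι] [Fintype κ] [Fintype κ']
  [DecidableEq m] [DecidableEq n] [DecidableEq ι] [DecidableEq κ] [DecidableEq κ']

noncomputable def gramMatrix (L : ℕ) (U₁ : Matrix m ι ℝ) (V₁ : Matrix n ι ℝ) (lam : ι → ℝ) :
    Matrix (m × n) (m × n) ℝ :=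
  (U₁ * diagonal (fun i => lam i ^ (2 * (L - 1))) * U₁ᵀ) ⊗ₖ (1 : Matrix n n ℝ) +
    (1 : Matrix m m ℝ) ⊗ₖ (V₁ * diagonal (fun i => lam i ^ (2 * (L - 1))) * V₁ᵀ) +
    ∑ l ∈ Finset.Icc 2 (L - 1),
      (U₁ * diagonal (fun i => lam i ^ (2 * (L - l))) * U₁ᵀ) ⊗ₖ
        (V₁ * diagonal (fun i => lam i ^ (2 * (l - 1))) * V₁ᵀ)

/-- The diagonal of `gramMatrix L U₁ V₁ lam` in the basis `[U₁ U₂] ⊗ [V₁ V₂]`. -/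
def gramSpectrum (L : ℕ) (lam : ι → ℝ) : (ι ⊕ κ) × (ι ⊕ κ') → ℝ
  | (.inl i, .inl j) => ∑ l ∈ Finset.Icc 1 L, lam i ^ (2 * (L - l)) * lam j ^ (2 * (l - 1))
  | (.inl i, .inr _) => lam i ^ (2 * (L - 1))
  | (.inr _, .inl j) => lam j ^ (2 * (L - 1))
  | (.inr _, .inr _) => 0

theorem gramMatrix_eq_mul_diagonal_mul_transpose {L : ℕ} (hL : 2 ≤ L)
    {U₁ : Matrix m ι ℝ} {U₂ : Matrix m κ ℝ} {V₁ : Matrix n ι ℝ} {V₂ : Matrix n κ' ℝ}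
    (hU : fromCols U₁ U₂ * (fromCols U₁ U₂)ᵀ = 1) (hV : fromCols V₁ V₂ * (fromCols V₁ V₂)ᵀ = 1)
    (lam : ι → ℝ) :
    gramMatrix L U₁ V₁ lam =
      (fromCols U₁ U₂ ⊗ₖ fromCols V₁ V₂) *
        diagonal (gramSpectrum L lam : (ι ⊕ κ) × (ι ⊕ κ') → ℝ) *
          (fromCols U₁ U₂ ⊗ₖ fromCols V₁ V₂)ᵀ := by
  have hU₁ (d : ι → ℝ) := (fromCols_mul_diagonal_elim_zero_mul_transpose U₁ U₂ d).symm
  have hV₁ (d : ι → ℝ) := (fromCols_mul_diagonal_elim_zero_mul_transpose V₁ V₂ d).symm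
  have hU_one : (1 : Matrix m m ℝ) =
      fromCols U₁ U₂ * (1 : Matrix (ι ⊕ κ) (ι ⊕ κ) ℝ) * (fromCols U₁ U₂)ᵀ := by
    rw [Matrix.mul_one, hU]
  have hV_one : (1 : Matrix n n ℝ) =
      fromCols V₁ V₂ * (1 : Matrix (ι ⊕ κ') (ι ⊕ κ') ℝ) * (fromCols V₁ V₂)ᵀ := by
    rw [Matrix.mul_one, hV]
  simp only [gramMatrix]
  rw [hU_one, hV_one]
  simp only [hU₁, hV₁, mul_mul_transpose_kronecker, ← Matrix.mul_sum, ← Matrix.sum_mul,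
    ← Matrix.mul_add, ← Matrix.add_mul, ← diagonal_one, diagonal_kronecker_diagonal]
  congr 2
  ext p q
  obtain rfl | hpq := eq_or_ne p q
  · rcases p with ⟨i | i, j | j⟩ <;>
      simp [Matrix.sum_apply, gramSpectrum, Finset.sum_Icc_one_eq_add_add_sum_Icc_two hL]
  · simp [Matrix.sum_apply, hpq]

theorem map_eigenvalues_gramMatrix [Fintype m] [Fintype n] {L : ℕ} (hL : 2 ≤ L) {U₁ : Matrix m ι ℝ}
    {V₁ : Matrix n ι ℝ} (hU₁ : U₁ᵀ * U₁ = 1) (hV₁ : V₁ᵀ * V₁ = 1)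
    (hm : Fintype.card ι + Fintype.card κ = Fintype.card m)
    (hn : Fintype.card ι + Fintype.card κ' = Fintype.card n) (lam : ι → ℝ)
    (hG : (gramMatrix L U₁ V₁ lam).IsHermitian) :
    Finset.univ.val.map hG.eigenvalues =
      (Finset.univ.val.map fun p : ι × ι =>
        ∑ l ∈ Finset.Icc 1 L, lam p.1 ^ (2 * (L - l)) * lam p.2 ^ (2 * (l - 1))) +
      (Finset.univ.val.bind fun i =>
        Multiset.replicate (Fintype.card κ') (lam i ^ (2 * (L - 1)))) +
      (Finset.univ.val.bind fun j =>
        Multiset.replicate (Fintype.card κ) (lam j ^ (2 * (L - 1)))) +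
      Multiset.replicate (Fintype.card κ * Fintype.card κ') 0 := by
  obtain ⟨U₂, hUU, hUU'⟩ := exists_orthogonal_fromCols (κ := κ) U₁ hU₁ hm
  obtain ⟨V₂, hVV, hVV'⟩ := exists_orthogonal_fromCols (κ := κ') V₁ hV₁ hn
  have hW : (fromCols U₁ U₂ ⊗ₖ fromCols V₁ V₂)ᵀ * (fromCols U₁ U₂ ⊗ₖ fromCols V₁ V₂) = 1 := by
    rw [← kroneckerMap_transpose, ← mul_kronecker_mul, hUU, hVV, one_kronecker_one]
  rw [hG.eigenvalues_map_eq_of_eq_mul_diagonal_mul_transpose hW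
      (by simp [Fintype.card_sum, ← hm, ← hn])
      (gramMatrix_eq_mul_diagonal_mul_transpose hL hUU' hVV' lam),
    Multiset.map_univ_sum_prod_sum]
  simp only [gramSpectrum]
  rw [Multiset.map_univ_prod_fst (fun i => lam i ^ (2 * (L - 1))),
    Multiset.map_univ_prod_snd (fun j => lam j ^ (2 * (L - 1))), Multiset.map_const',
    Finset.card_val, Finset.card_univ, Fintype.card_prod]

end Gram

theorem statement3_general (L d0 dL r : ℕ) (hL : 2 ≤ L)
    (hr : r ≤ min d0 dL)
    (U1 : Matrix (Fin dL) (Fin r) ℝ) (V1 : Matrix (Fin d0) (Fin r) ℝ)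
    (hU1 : U1ᵀ * U1 = 1) (hV1 : V1ᵀ * V1 = 1)
    (lam : Fin r → ℝ)
    (m δ : ℝ) (hδ : 0 < δ) (hδm : δ < m)
    (hmem : ∀ i, lam i ∈ Set.Icc (m - δ) (m + δ))
    (hgap : (m + δ) / (m - δ) < (L : ℝ) ^ ((1 : ℝ) / (2 * ((L : ℝ) - 1))))
    (G : Matrix (Fin dL × Fin d0) (Fin dL × Fin d0) ℝ)
    (hGdef : G =
      (U1 * Matrix.diagonal (fun i => lam i ^ (2 * (L - 1))) * U1ᵀ) ⊗ₖ
          (1 : Matrix (Fin d0) (Fin d0) ℝ) +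
        (1 : Matrix (Fin dL) (Fin dL) ℝ) ⊗ₖ
          (V1 * Matrix.diagonal (fun i => lam i ^ (2 * (L - 1))) * V1ᵀ) +
        ∑ l ∈ Finset.Icc 2 (L - 1),
          (U1 * Matrix.diagonal (fun i => lam i ^ (2 * (L - l))) * U1ᵀ) ⊗ₖ
            (V1 * Matrix.diagonal (fun i => lam i ^ (2 * (l - 1))) * V1ᵀ))
    (hG : G.IsHermitian) :
    -- the eigenvalues of `G` are exactly the two clusters together with zero
    (Finset.univ.val.map hG.eigenvalues =
        (Finset.univ.val.map fun p : Fin r × Fin r =>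
          ∑ l ∈ Finset.Icc 1 L, lam p.1 ^ (2 * (L - l)) * lam p.2 ^ (2 * (l - 1))) +
        (Finset.univ.val.bind fun i : Fin r =>
          Multiset.replicate (d0 - r) (lam i ^ (2 * (L - 1)))) +
        (Finset.univ.val.bind fun j : Fin r =>
          Multiset.replicate (dL - r) (lam j ^ (2 * (L - 1)))) +
        Multiset.replicate ((dL - r) * (d0 - r)) (0 : ℝ)) ∧
    -- (i) dominant cluster
    (∀ i j : Fin r,
      (∑ l ∈ Finset.Icc 1 L, lam i ^ (2 * (L - l)) * lam j ^ (2 * (l - 1))) ∈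
        Set.Icc ((L : ℝ) * (m - δ) ^ (2 * (L - 1))) ((L : ℝ) * (m + δ) ^ (2 * (L - 1)))) ∧
    -- (ii) bulk cluster
    (∀ i : Fin r,
      lam i ^ (2 * (L - 1)) ∈ Set.Icc ((m - δ) ^ (2 * (L - 1))) ((m + δ) ^ (2 * (L - 1)))) ∧
    -- (iii) strict separation of the clusters
    (∀ i j i' : Fin r,
      lam i' ^ (2 * (L - 1)) <
        ∑ l ∈ Finset.Icc 1 L, lam i ^ (2 * (L - l)) * lam j ^ (2 * (l - 1))) ∧
    -- (iv) dominant-to-bulk ratio bounds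
    (∀ i j i' : Fin r,
      (L : ℝ) * ((m - δ) / (m + δ)) ^ (2 * (L - 1)) ≤
          (∑ l ∈ Finset.Icc 1 L, lam i ^ (2 * (L - l)) * lam j ^ (2 * (l - 1))) /
            lam i' ^ (2 * (L - 1)) ∧
        (∑ l ∈ Finset.Icc 1 L, lam i ^ (2 * (L - l)) * lam j ^ (2 * (l - 1))) /
            lam i' ^ (2 * (L - 1)) ≤
          (L : ℝ) * ((m + δ) / (m - δ)) ^ (2 * (L - 1))) := by
  have hlo : 0 < m - δ := sub_pos.2 hδm
  have hdom (i j : Fin r) := sum_pow_mul_pow_mem_Icc L 2 hlo.le (hmem i) (hmem j)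
  have hbulk (i : Fin r) : lam i ^ (2 * (L - 1)) ∈
      Set.Icc ((m - δ) ^ (2 * (L - 1))) ((m + δ) ^ (2 * (L - 1))) :=
    ⟨pow_le_pow_left₀ hlo.le (hmem i).1 _,
      pow_le_pow_left₀ (hlo.le.trans (hmem i).1) (hmem i).2 _⟩
  have hgap_pow : (m + δ) ^ (2 * (L - 1)) < L * (m - δ) ^ (2 * (L - 1)) := by
    refine pow_lt_mul_pow_of_div_lt_rpow_inv (by omega) L.cast_nonneg hlo (by linarith) ?_
    convert hgap using 2
    push_cast [Nat.cast_sub (by omega : 1 ≤ L)]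
    ring
  refine ⟨?_, hdom, hbulk, fun i j i' => (hbulk i').2.trans_lt (hgap_pow.trans_le (hdom i j).1),
    fun i j i' => ?_⟩
  · subst hGdef
    have hrd0 : r ≤ d0 := hr.trans (min_le_left _ _)
    have hrdL : r ≤ dL := hr.trans (min_le_right _ _)
    have h := map_eigenvalues_gramMatrix (κ := Fin (dL - r))
      (κ' := Fin (d0 - r)) hL hU1 hV1 (by simp; omega) (by simp; omega) lam hG
    simp only [Fintype.card_fin] at h
    exact h
  · simpa only [div_pow, mul_div_assoc, Set.mem_Icc] using
      div_mem_Icc_div (hdom i j) (hbulk i') (by positivity) (by positivity)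

/-- For the general Gram matrix `G` of the outer-product Hessian of a
depth-`L` deep linear network, if all `λᵢ ∈ [m − δ, m + δ]` with `0 < δ < m` and
`(m + δ)/(m − δ) < L^{1/(2(L−1))}`, then the eigenvalues of `G` bifurcate: the `r²` dominant
eigenvalues `ν_{i,j}` lie in `[L(m − δ)^{2(L−1)}, L(m + δ)^{2(L−1)}]`, the
`(d₀ + d_L − 2r)r` bulk eigenvalues lie in `[(m − δ)^{2(L−1)}, (m + δ)^{2(L−1)}]`, every
dominant eigenvalue strictly exceeds every bulk eigenvalue, and the dominant/bulk ratio is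
pinched between `L((m−δ)/(m+δ))^{2(L−1)}` and `L((m+δ)/(m−δ))^{2(L−1)}`. -/
theorem statement3 (L d0 dL r : ℕ) (hL : 2 ≤ L) (hd0 : 1 ≤ d0) (hdL : 1 ≤ dL)
    (hr1 : 1 ≤ r) (hr : r ≤ min d0 dL)
    (U1 : Matrix (Fin dL) (Fin r) ℝ) (V1 : Matrix (Fin d0) (Fin r) ℝ)
    (hU1 : U1ᵀ * U1 = 1) (hV1 : V1ᵀ * V1 = 1)
    (lam : Fin r → ℝ) (hlam : ∀ i, 0 < lam i)
    (m δ : ℝ) (hδ : 0 < δ) (hδm : δ < m)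
    (hmem : ∀ i, lam i ∈ Set.Icc (m - δ) (m + δ))
    (hgap : (m + δ) / (m - δ) < (L : ℝ) ^ ((1 : ℝ) / (2 * ((L : ℝ) - 1))))
    (G : Matrix (Fin dL × Fin d0) (Fin dL × Fin d0) ℝ)
    (hGdef : G =
      (U1 * Matrix.diagonal (fun i => lam i ^ (2 * (L - 1))) * U1ᵀ) ⊗ₖ
          (1 : Matrix (Fin d0) (Fin d0) ℝ) +
        (1 : Matrix (Fin dL) (Fin dL) ℝ) ⊗ₖ
          (V1 * Matrix.diagonal (fun i => lam i ^ (2 * (L - 1))) * V1ᵀ) +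
        ∑ l ∈ Finset.Icc 2 (L - 1),
          (U1 * Matrix.diagonal (fun i => lam i ^ (2 * (L - l))) * U1ᵀ) ⊗ₖ
            (V1 * Matrix.diagonal (fun i => lam i ^ (2 * (l - 1))) * V1ᵀ))
    (hG : G.IsHermitian) :
    -- the eigenvalues of `G` are exactly the two clusters together with zero
    (Finset.univ.val.map hG.eigenvalues =
        (Finset.univ.val.map fun p : Fin r × Fin r =>
          ∑ l ∈ Finset.Icc 1 L, lam p.1 ^ (2 * (L - l)) * lam p.2 ^ (2 * (l - 1))) +
        (Finset.univ.val.bind fun i : Fin r =>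
          Multiset.replicate (d0 - r) (lam i ^ (2 * (L - 1)))) +
        (Finset.univ.val.bind fun j : Fin r =>
          Multiset.replicate (dL - r) (lam j ^ (2 * (L - 1)))) +
        Multiset.replicate ((dL - r) * (d0 - r)) (0 : ℝ)) ∧
    -- (i) dominant cluster
    (∀ i j : Fin r,
      (∑ l ∈ Finset.Icc 1 L, lam i ^ (2 * (L - l)) * lam j ^ (2 * (l - 1))) ∈
        Set.Icc ((L : ℝ) * (m - δ) ^ (2 * (L - 1))) ((L : ℝ) * (m + δ) ^ (2 * (L - 1)))) ∧
    -- (ii) bulk cluster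
    (∀ i : Fin r,
      lam i ^ (2 * (L - 1)) ∈ Set.Icc ((m - δ) ^ (2 * (L - 1))) ((m + δ) ^ (2 * (L - 1)))) ∧
    -- (iii) strict separation of the clusters
    (∀ i j i' : Fin r,
      lam i' ^ (2 * (L - 1)) <
        ∑ l ∈ Finset.Icc 1 L, lam i ^ (2 * (L - l)) * lam j ^ (2 * (l - 1))) ∧
    -- (iv) dominant-to-bulk ratio bounds
    (∀ i j i' : Fin r,
      (L : ℝ) * ((m - δ) / (m + δ)) ^ (2 * (L - 1)) ≤
          (∑ l ∈ Finset.Icc 1 L, lam i ^ (2 * (L - l)) * lam j ^ (2 * (l - 1))) /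
            lam i' ^ (2 * (L - 1)) ∧
        (∑ l ∈ Finset.Icc 1 L, lam i ^ (2 * (L - l)) * lam j ^ (2 * (l - 1))) /
            lam i' ^ (2 * (L - 1)) ≤
          (L : ℝ) * ((m + δ) / (m - δ)) ^ (2 * (L - 1))) :=
  statement3_general L d0 dL r hL hr U1 V1 hU1 hV1 lam m δ hδ hδm hmem hgap G hGdef hG
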